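/- Let q > Q(h) for a given h ≥ 0. If (v_0,…,v_{j−1}) > (u_0,…,u_{j−1}) are binary words whose first differing index is h (i.e. v_k = u_k for k < h, v_h = 1, u_h = 0), then ∑_{k=0}^{j−1} (f_k/q^k) v_k > ∑_{k=0}^{j−1} (f_k/q^k) u_k + q^{−j} S(q,j). In particular the intervals [∑ (f_k/q^k) u_k, ∑ (f_k/q^k) u_k + q^{−j} S(q,j)] indexed by binary words of length j are pairwise disjoint, and lexicographically larger words give intervals strictly to the right. -/

import Mathlib

open scoped BigOperators

noncomputable def fibr (k : ℕ) : ℝ := Nat.fib (k + 1)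

noncomputable def phi : ℝ := (1 + Real.sqrt 5) / 2

noncomputable def S (q : ℝ) (j : ℕ) : ℝ := ∑' k : ℕ, fibr (j + k) / q ^ k

noncomputable def Q (j : ℕ) : ℝ :=
  (fibr (j + 2) + Real.sqrt ((fibr (j + 2)) ^ 2 + 8 * (fibr j) ^ 2)) / (2 * fibr j)

/-!
The two words agree before `h`, so the difference of the sums is `f_h/q^h` plus a tail
`∑_{h<k<j} (f_k/q^k)(v_k - u_k) ≥ -∑_{h<k<j} f_k/q^k`, and this tail sum plus `S(q,j)/q^j` is
`S(q,h+1)/q^(h+1)`. So it suffices that `S(q,h+1) < q f_h`. Eliminating `S(q,h)` and `S(q,h+2)`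
from the shift relation `S(q,j) = f_j + S(q,j+1)/q` and the recurrence
`S(q,j+2) = S(q,j+1) + S(q,j)` gives `(q² - q - 1) S(q,h+1) = q² f_(h+1) + q f_h`, which turns
the claim into `f_h q² - f_(h+2) q - 2 f_h > 0`, i.e. `q` beyond the larger root `Q(h)`.
-/

open Finset

lemma phi_pos : 0 < phi := Real.goldenRatio_pos

lemma phi_lt_two : phi < 2 := Real.goldenRatio_lt_two

lemma fibr_pos (k : ℕ) : 0 < fibr k := by
  unfold fibr
  exact_mod_cast Nat.fib_pos.mpr k.succ_pos

lemma fibr_add_two (k : ℕ) : fibr (k + 2) = fibr (k + 1) + fibr k := by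
  unfold fibr
  push_cast [Nat.fib_add_two]
  ring

lemma fibr_le_fibr_succ (k : ℕ) : fibr k ≤ fibr (k + 1) := by
  unfold fibr
  exact_mod_cast Nat.fib_le_fib_succ

lemma fibr_le_phi_pow (k : ℕ) : fibr k ≤ phi ^ k := by
  have hbinet := Real.fib_succ_sub_goldenConj_mul_fib k
  have hψ : Real.goldenConj * Nat.fib k ≤ 0 :=
    mul_nonpos_of_nonpos_of_nonneg Real.goldenConj_neg.le (Nat.cast_nonneg _)
  change (Nat.fib (k + 1) : ℝ) ≤ Real.goldenRatio ^ k
  linarith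

section Series

variable {q : ℝ} (hq : phi < q)
include hq

lemma summable_fibr_div_pow (j : ℕ) : Summable (fun k : ℕ => fibr (j + k) / q ^ k) := by
  have hq0 : 0 < q := phi_pos.trans hq
  have hratio : phi / q < 1 := (div_lt_one hq0).mpr hq
  have hgeo : Summable (fun k : ℕ => phi ^ j * (phi / q) ^ k) :=
    (summable_geometric_of_lt_one (div_nonneg phi_pos.le hq0.le) hratio).mul_left _
  refine hgeo.of_nonneg_of_le (fun k => div_nonneg (fibr_pos _).le (pow_pos hq0 k).le)
    (fun k => ?_)
  calc fibr (j + k) / q ^ k ≤ phi ^ (j + k) / q ^ k := by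
        gcongr
        exact fibr_le_phi_pow _
    _ = phi ^ j * (phi / q) ^ k := by rw [pow_add, div_pow, mul_div_assoc]

lemma S_eq_add_S_succ_div (j : ℕ) : S q j = fibr j + S q (j + 1) / q := by
  rw [S, (summable_fibr_div_pow hq j).tsum_eq_zero_add, S, ← tsum_div_const]
  congr 1
  · simp
  · refine tsum_congr fun k => ?_
    rw [pow_succ, ← div_div, add_right_comm, add_assoc]

lemma S_add_two (j : ℕ) : S q (j + 2) = S q (j + 1) + S q j := by
  rw [S, S, S, ← (summable_fibr_div_pow hq (j + 1)).tsum_add (summable_fibr_div_pow hq j)]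
  refine tsum_congr fun k => ?_
  rw [← add_div, add_right_comm, fibr_add_two (j + k), add_right_comm]

lemma sum_Ico_add_S_div_pow {m n : ℕ} (hmn : m ≤ n) :
    ∑ k ∈ Ico m n, fibr k / q ^ k + S q n / q ^ n = S q m / q ^ m := by
  induction n, hmn using Nat.le_induction with
  | base => simp
  | succ n hmn ih =>
    have hq0 : q ≠ 0 := (phi_pos.trans hq).ne'
    rw [sum_Ico_succ_top hmn, ← ih, S_eq_add_S_succ_div hq n, pow_succ]
    field_simp
    ring

lemma sub_sq_sub_one_mul_S_succ (j : ℕ) :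
    (q ^ 2 - q - 1) * S q (j + 1) = q ^ 2 * fibr (j + 1) + q * fibr j := by
  have hq0 : q ≠ 0 := (phi_pos.trans hq).ne'
  have h0 := S_eq_add_S_succ_div hq j
  have h1 := S_eq_add_S_succ_div hq (j + 1)
  have h2 := S_add_two hq j
  field_simp at h0 h1
  linear_combination q * h1 + q * h2 + h0

end Series

lemma mul_sq_sub_mul_sub_pos {a b c q : ℝ} (ha : 0 < a) (hc : 0 ≤ c)
    (hq : (b + √(b ^ 2 + 4 * a * c)) / (2 * a) < q) : 0 < a * q ^ 2 - b * q - c := by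
  have hs := Real.sq_sqrt (by positivity : 0 ≤ b ^ 2 + 4 * a * c)
  have hs0 := Real.sqrt_nonneg (b ^ 2 + 4 * a * c)
  rw [div_lt_iff₀ (by positivity)] at hq
  nlinarith

lemma two_lt_Q (h : ℕ) : 2 < Q h := by
  have ha := fibr_pos h
  have hb : 2 * fibr h ≤ fibr (h + 2) := by
    linarith [fibr_add_two h, fibr_le_fibr_succ h]
  have hsqrt : fibr (h + 2) < √(fibr (h + 2) ^ 2 + 8 * fibr h ^ 2) :=
    Real.lt_sqrt_of_sq_lt (by nlinarith)
  rw [Q, lt_div_iff₀ (by positivity)]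
  linarith

lemma S_succ_lt_mul_fibr {h : ℕ} {q : ℝ} (hq : Q h < q) : S q (h + 1) < q * fibr h := by
  have h2q : 2 < q := (two_lt_Q h).trans hq
  have hphi : phi < q := phi_lt_two.trans h2q
  have hquad : 0 < fibr h * q ^ 2 - fibr (h + 2) * q - 2 * fibr h := by
    refine mul_sq_sub_mul_sub_pos (fibr_pos h) (by linarith [fibr_pos h]) ?_
    rwa [Q, show (8 : ℝ) * fibr h ^ 2 = 4 * fibr h * (2 * fibr h) by ring] at hq
  have hD : 0 < q ^ 2 - q - 1 := by nlinarith
  have hX := sub_sq_sub_one_mul_S_succ hphi h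
  rw [fibr_add_two] at hquad
  refine lt_of_mul_lt_mul_left ?_ hD.le
  nlinarith

lemma S_succ_div_pow_lt_fibr_div_pow {h : ℕ} {q : ℝ} (hq : Q h < q) :
    S q (h + 1) / q ^ (h + 1) < fibr h / q ^ h := by
  have hq0 : 0 < q := (zero_lt_two.trans (two_lt_Q h)).trans hq
  rw [div_lt_div_iff₀ (by positivity) (by positivity), pow_succ]
  nlinarith [S_succ_lt_mul_fibr hq, pow_pos hq0 h]

lemma sub_sum_Ico_le_sum_mul_sub_sum_mul {c u v : ℕ → ℝ} {h j : ℕ} (hhj : h < j)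
    (hc : ∀ k ∈ Ico (h + 1) j, 0 ≤ c k) (hu : ∀ k ∈ Ico (h + 1) j, u k ≤ 1)
    (hv : ∀ k ∈ Ico (h + 1) j, 0 ≤ v k) (hagree : ∀ k < h, v k = u k)
    (hvh : v h = 1) (huh : u h = 0) :
    c h - ∑ k ∈ Ico (h + 1) j, c k ≤ ∑ k ∈ range j, c k * v k - ∑ k ∈ range j, c k * u k := by
  have hhead : ∑ k ∈ range (h + 1), (c k * v k - c k * u k) = c h := by
    rw [sum_range_succ, sum_eq_zero fun k hk => by rw [hagree k (mem_range.mp hk), sub_self],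
      hvh, huh]
    ring
  have htail : -∑ k ∈ Ico (h + 1) j, c k ≤ ∑ k ∈ Ico (h + 1) j, (c k * v k - c k * u k) := by
    rw [← sum_neg_distrib]
    gcongr with k hk
    nlinarith [hc k hk, hu k hk, hv k hk]
  rw [← sum_sub_distrib, ← sum_range_add_sum_Ico _ hhj, hhead]
  linarith

theorem separation_of_branches (h j : ℕ) (hhj : h < j) (q : ℝ) (hq : Q h < q)
    (u v : ℕ → ℝ) (hu : ∀ k < j, u k = 0 ∨ u k = 1) (hv : ∀ k < j, v k = 0 ∨ v k = 1)
    (hagree : ∀ k < h, v k = u k) (hvh : v h = 1) (huh : u h = 0) :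
    (∑ k ∈ Finset.range j, fibr k / q ^ k * v k) >
      (∑ k ∈ Finset.range j, fibr k / q ^ k * u k) + S q j / q ^ j := by
  have hphi : phi < q := phi_lt_two.trans ((two_lt_Q h).trans hq)
  have hq0 : 0 < q := phi_pos.trans hphi
  have hdiff := sub_sum_Ico_le_sum_mul_sub_sum_mul (c := fun k => fibr k / q ^ k) hhj
    (fun k _ => div_nonneg (fibr_pos k).le (pow_pos hq0 k).le)
    (fun k hk => by rcases hu k (mem_Ico.mp hk).2 with hk0 | hk1 <;> simp [*])
    (fun k hk => by rcases hv k (mem_Ico.mp hk).2 with hk0 | hk1 <;> simp [*]) hagree hvh huh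
  have htail := sum_Ico_add_S_div_pow (m := h + 1) hphi hhj
  linarith [S_succ_div_pow_lt_fibr_div_pow hq]
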